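/- Let $k$ be a field of characteristic $p > 0$ and $V$ a finite-dimensional module over $k[t]/t^p$, with $T$ denoting the action of $t$. Then $V$ is a free $k[t]/t^p$-module if and only if $\ker T = \operatorname{im} T^{p-1}$. -/
import Mathlib

open Module LinearMap Polynomial

section Aux

variable {k : Type*} [Field k] (p : ℕ)

lemma aux_root_pow : (AdjoinRoot.root (X ^ p : k[X])) ^ p = 0 := by
  rw [← AdjoinRoot.mk_X, ← map_pow, AdjoinRoot.mk_self]

lemma aux_ker (hp : 0 < p) (c : AdjoinRoot (X ^ p : k[X]))
    (hc : AdjoinRoot.root (X ^ p : k[X]) * c = 0) :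
    ∃ d, c = (AdjoinRoot.root (X ^ p : k[X])) ^ (p - 1) * d := by
  obtain ⟨f, rfl⟩ := AdjoinRoot.mk_surjective c
  rw [← AdjoinRoot.mk_X, ← map_mul, AdjoinRoot.mk_eq_zero] at hc
  obtain ⟨g, hg⟩ := hc
  have hXp : (X : k[X]) ^ p = X * X ^ (p - 1) := by
    rw [← pow_succ', Nat.sub_add_cancel hp]
  have hf : f = X ^ (p - 1) * g := by
    apply mul_left_cancel₀ (Polynomial.X_ne_zero (R := k))
    rw [hg, hXp, mul_assoc]
  refine ⟨AdjoinRoot.mk _ g, ?_⟩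
  rw [hf, map_mul, map_pow, AdjoinRoot.mk_X]

lemma aux_dec (d : AdjoinRoot (X ^ p : k[X])) :
    ∃ (a : k) (d' : AdjoinRoot (X ^ p : k[X])),
      d = algebraMap k _ a + AdjoinRoot.root (X ^ p : k[X]) * d' := by
  obtain ⟨f, rfl⟩ := AdjoinRoot.mk_surjective d
  refine ⟨f.coeff 0, AdjoinRoot.mk _ f.divX, ?_⟩
  conv_lhs => rw [← Polynomial.X_mul_divX_add f]
  rw [map_add, map_mul, AdjoinRoot.mk_X, AdjoinRoot.mk_C, add_comm]
  rfl

end Aux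

/-- Let `V` be a finite-dimensional module over `k[t]/t^p` (realized as
`AdjoinRoot (X^p)`), with `T` the action of `t`. Then `V` is free over `k[t]/t^p` iff
`ker T = im T^(p-1)`. -/
theorem stmt2 {k : Type*} [Field k] (p : ℕ) (hp : 0 < p) [CharP k p]
    (V : Type*) [AddCommGroup V] [Module k V] [FiniteDimensional k V]
    [Module (AdjoinRoot (X ^ p : k[X])) V]
    [IsScalarTower k (AdjoinRoot (X ^ p : k[X])) V]
    (T : V →ₗ[k] V)
    (hT : ∀ x : V, T x = AdjoinRoot.root (X ^ p : k[X]) • x) :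
    Module.Free (AdjoinRoot (X ^ p : k[X])) V ↔
      LinearMap.ker T = LinearMap.range (T ^ (p - 1)) := by
  set τ : AdjoinRoot (X ^ p : k[X]) := AdjoinRoot.root (X ^ p : k[X]) with hτdef
  have hτp : τ ^ p = 0 := aux_root_pow p
  have hTpow : ∀ (n : ℕ) (x : V), (T ^ n) x = τ ^ n • x := by
    intro n
    induction n with
    | zero => intro x; simp
    | succ n ih =>
      intro x
      rw [pow_succ, Module.End.mul_apply, hT, ih, pow_succ, mul_smul]
  -- range (T^(p-1)) ≤ ker T, always
  have hsub : LinearMap.range (T ^ (p - 1)) ≤ LinearMap.ker T := by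
    rintro x ⟨y, rfl⟩
    rw [LinearMap.mem_ker, hT, hTpow, smul_smul, ← pow_succ', Nat.sub_add_cancel hp,
      hτp, zero_smul]
  constructor
  · -- free → ker = range
    intro hfree
    haveI := hfree
    refine le_antisymm ?_ hsub
    intro x hx
    have hx' : τ • x = 0 := by rw [← hT]; exact hx
    let b := Module.Free.chooseBasis (AdjoinRoot (X ^ p : k[X])) V
    set l := b.repr x with hl
    have hli : ∀ i, τ * l i = 0 := by
      intro i
      have h1 : b.repr (τ • x) = τ • b.repr x := map_smul _ _ _
      rw [hx', map_zero] at h1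
      simpa using DFunLike.congr_fun h1.symm i
    have hd : ∀ i, ∃ d, l i = τ ^ (p - 1) * d := fun i => aux_ker p hp (l i) (hli i)
    choose d hds using hd
    refine ⟨∑ i ∈ l.support, d i • b i, ?_⟩
    rw [hTpow, Finset.smul_sum]
    have : ∀ i ∈ l.support, τ ^ (p-1) • d i • b i = l i • b i := by
      intro i _
      rw [smul_smul, ← hds i]
    rw [Finset.sum_congr rfl this]
    conv_rhs => rw [← b.linearCombination_repr x]
    rw [Finsupp.linearCombination_apply, Finsupp.sum]
  · -- ker = range → free
    intro hker
    set K := LinearMap.ker T with hK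
    let b0 := Basis.ofVectorSpace k K
    have hb0 : LinearIndependent k (fun i => ((b0 i : K) : V)) :=
      b0.linearIndependent.map' K.subtype (LinearMap.ker_eq_bot.2 K.injective_subtype)
    have hv : ∀ i, ∃ y : V, (T ^ (p - 1)) y = ((b0 i : K) : V) := by
      intro i
      have : ((b0 i : K) : V) ∈ LinearMap.range (T ^ (p - 1)) := hker ▸ (b0 i).2
      exact this
    choose v hvspec using hv
    set U : Submodule (AdjoinRoot (X ^ p : k[X])) V := Submodule.span _ (Set.range v) with hU
    have hvU : ∀ i, v i ∈ U := fun i => Submodule.subset_span (Set.mem_range_self i)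
    -- spanning
    have hb0mem : ∀ j, j ≤ p - 1 → ∀ i, ((b0 i : K) : V) ∈
        Submodule.map (T ^ j) (U.restrictScalars k) := by
      intro j hj i
      refine ⟨τ ^ (p - 1 - j) • v i, Submodule.smul_mem _ _ (hvU i), ?_⟩
      rw [hTpow, smul_smul, ← pow_add, Nat.add_sub_cancel' hj, ← hTpow, hvspec]
    have hKspan : Submodule.span k (Set.range fun i => ((b0 i : K) : V)) = K := by
      have h1 : (Set.range fun i => ((b0 i : K) : V)) = K.subtype '' Set.range b0 := by
        rw [← Set.range_comp]; rfl
      rw [h1, ← Submodule.map_span, b0.span_eq, Submodule.map_subtype_top]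
    have hKle : ∀ j, j ≤ p - 1 → K ≤ Submodule.map (T ^ j) (U.restrictScalars k) := by
      intro j hj
      rw [← hKspan]
      refine Submodule.span_le.2 ?_
      rintro _ ⟨i, rfl⟩
      exact hb0mem j hj i
    have key : ∀ j, j ≤ p → ∀ x : V, (T ^ j) x = 0 → x ∈ U := by
      intro j
      induction j with
      | zero =>
        intro _ x hx
        simp only [pow_zero, Module.End.one_apply] at hx
        rw [hx]; exact U.zero_mem
      | succ j ih =>
        intro hj x hx
        have hxK : (T ^ j) x ∈ K := by
          rw [hK, LinearMap.mem_ker, ← Module.End.mul_apply, ← pow_succ']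
          exact hx
        obtain ⟨u, hu, huu⟩ := hKle j (by omega) hxK
        have hxu : (T ^ j) (x - u) = 0 := by rw [map_sub, huu, sub_self]
        have h1 : x - u ∈ U := ih (by omega) _ hxu
        have h2 : u ∈ U := hu
        have := U.add_mem h1 h2
        simpa using this
    have hspan : ⊤ ≤ Submodule.span (AdjoinRoot (X ^ p : k[X])) (Set.range v) := by
      intro x _
      exact key p le_rfl x (by rw [hTpow, hτp, zero_smul])
    -- independence
    have hind : LinearIndependent (AdjoinRoot (X ^ p : k[X])) v := by
      rw [linearIndependent_iff]
      intro l hl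
      have main : ∀ m, m ≤ p → ∀ i, ∃ d, l i = τ ^ m * d := by
        intro m
        induction m with
        | zero => exact fun _ i => ⟨l i, by rw [pow_zero, one_mul]⟩
        | succ m ih =>
          intro hm
          choose d hds using ih (by omega)
          choose a d' hdec using fun i => aux_dec p (d i)
          have h2 : (T ^ (p - 1 - m)) (Finsupp.linearCombination _ v l) = 0 := by
            rw [hl, map_zero]
          rw [Finsupp.linearCombination_apply, Finsupp.sum, map_sum] at h2
          have h3 : ∀ i ∈ l.support, (T ^ (p - 1 - m)) (l i • v i)
              = a i • ((b0 i : K) : V) := by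
            intro i _
            rw [hTpow, smul_smul, hds i, hdec i]
            have e1 : τ ^ (p - 1 - m) * τ ^ m = τ ^ (p - 1) := by
              rw [← pow_add, Nat.sub_add_cancel (by omega)]
            have e2 : τ ^ (p - 1) * τ = 0 := by
              rw [← pow_succ, Nat.sub_add_cancel hp, hτp]
            have hmul : τ ^ (p - 1 - m) * (τ ^ m * (algebraMap k _ (a i) + τ * d' i))
                = algebraMap k _ (a i) * τ ^ (p - 1) := by
              calc τ ^ (p - 1 - m) * (τ ^ m * (algebraMap k _ (a i) + τ * d' i))
                  = (τ ^ (p - 1 - m) * τ ^ m) * algebraMap k _ (a i)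
                    + ((τ ^ (p - 1 - m) * τ ^ m) * τ) * d' i := by ring
                _ = algebraMap k _ (a i) * τ ^ (p - 1) := by
                    rw [e1, e2, zero_mul, add_zero, mul_comm]
            rw [hmul, mul_smul, algebraMap_smul, ← hTpow, hvspec]
          rw [Finset.sum_congr rfl h3] at h2
          have ha : ∀ i ∈ l.support, a i = 0 :=
            linearIndependent_iff'.1 hb0 l.support a h2
          intro i
          by_cases hi : i ∈ l.support
          · refine ⟨d' i, ?_⟩
            rw [hds i, hdec i, ha i hi, map_zero, zero_add, pow_succ, mul_assoc]
          · exact ⟨0, by rw [Finsupp.notMem_support_iff.1 hi, mul_zero]⟩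
      have : ∀ i, l i = 0 := by
        intro i
        obtain ⟨d, hd⟩ := main p le_rfl i
        rw [hd, hτp, zero_mul]
      exact Finsupp.ext this
    exact Module.Free.of_basis (Basis.mk hind hspan)
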